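/- If two vertices v1 and v2 of a directed acyclic graph are d-separated by a set Z ⊆ V \ {v1, v2}, then X_{v1} is conditionally independent of X_{v2} given X_Z in any probability distribution that factorizes according to the DAG. -/

import Mathlib

/-!
STATEMENT 2: If two vertices v1 and v2 of a DAG are d-separated by a set
Z ⊆ V \ {v1, v2}, then X_{v1} is conditionally independent of X_{v2} given X_Z
in any probability distribution that factorizes according to the DAG.

We work with finitely many variables, each taking values in a finite type, so
that densities are probability mass functions and "factorizes according to the
DAG" means the joint pmf is the product over vertices of conditional pmfs of
each variable given its parents.
-/

namespace Stmt2

variable {V : Type*}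

/-- Two vertices are linked in a path if there is a directed edge between them
in either direction. -/
def AdjUndir (E : V → V → Prop) (a b : V) : Prop := E a b ∨ E b a

/-- A path (represented as its list of vertices) is blocked by `Z` if it contains
a consecutive triple `a, m, b` such that either `m` is a non-collider
(chain `a → m → b`, chain `b → m → a`, or fork `a ← m → b`) belonging to `Z`,
or `m` is a collider (`a → m ← b`) such that neither `m` nor any of its
descendants is in `Z`. -/
def Blocked (E : V → V → Prop) (Z : Set V) (path : List V) : Prop :=
  ∃ (pre post : List V) (a m b : V), path = pre ++ a :: m :: b :: post ∧
    ((((E a m ∧ E m b) ∨ (E b m ∧ E m a) ∨ (E m a ∧ E m b)) ∧ m ∈ Z) ∨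
      ((E a m ∧ E b m) ∧ ∀ d, Relation.ReflTransGen E m d → d ∉ Z))

/-- `v1` and `v2` are d-separated by `Z`: every path (a duplicate-free list of
vertices, consecutive ones adjacent in the underlying undirected graph,
starting at `v1` and ending at `v2`) is blocked by `Z`. -/
def DSep (E : V → V → Prop) (Z : Set V) (v1 v2 : V) : Prop :=
  ∀ path : List V, path.Chain' (AdjUndir E) → path.Nodup →
    path.head? = some v1 → path.getLast? = some v2 → Blocked E Z path

variable {Ω : V → Type*}

/-- The probability of an event under a pmf `p`. -/
noncomputable def pr [Fintype V] [DecidableEq V] [∀ v, Fintype (Ω v)]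
    (p : (∀ v, Ω v) → ℝ) (s : Set (∀ v, Ω v)) : ℝ :=
  ∑ x : ∀ v, Ω v, Set.indicator s p x

/-- A pmf `p` factorizes according to the directed graph `E` if it is the product
over all vertices `v` of a nonnegative kernel depending only on the value at `v`
and the values at the parents of `v`, each kernel being a conditional pmf
(it sums to one over the values at `v`). -/
def Factorizes [Fintype V] [DecidableEq V] [∀ v, Fintype (Ω v)]
    (E : V → V → Prop) (p : (∀ v, Ω v) → ℝ) : Prop :=
  ∃ f : ∀ _ : V, (∀ w, Ω w) → ℝ,
    (∀ v x, 0 ≤ f v x) ∧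
    (∀ v (x y : ∀ w, Ω w), x v = y v → (∀ w, E w v → x w = y w) → f v x = f v y) ∧
    (∀ v (x : ∀ w, Ω w), ∑ a : Ω v, f v (Function.update x v a) = 1) ∧
    (∀ x, p x = ∏ v, f v x)

/-!
Summing out the non-ancestors `V \ T` of `{v1, v2} ∪ Z`, sinks first, leaves the product of the
kernels of `T` with all other variables frozen. Let `S` consist of `Z` and the vertices of `T`
reachable from `v1` by an active walk; `v2 ∉ S`, since an active walk shortens to an active path.
Every family of `T` lies in `S` or meets `S` only inside `Z`: when a walk arrives at a collider `v`
that is not an ancestor of `Z`, a `Z`-free directed path leads from `v` to `v1` (one to `v2` would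
make `v2` reachable) and the walk is rerouted along it. So, once `Z` is fixed, the weight is a
function of the coordinates in `S` times a function of those outside, which is conditional
independence.
-/

lemma _root_.List.exists_eq_append_cons_append_cons_of_not_nodup {α : Type*} {w : List α}
    (h : ¬ w.Nodup) : ∃ (c : α) (s t u : List α), w = s ++ c :: (t ++ c :: u) := by
  induction w with
  | nil => simp at h
  | cons x xs ih =>
    by_cases hx : x ∈ xs
    · obtain ⟨t, u, rfl⟩ := List.append_of_mem hx
      exact ⟨x, [], t, u, by simp⟩
    · obtain ⟨c, s, t, u, rfl⟩ := ih fun hn => h (List.nodup_cons.2 ⟨hx, hn⟩)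
      exact ⟨c, x :: s, t, u, by simp⟩

section ActiveWalks

variable {E : V → V → Prop} {Z : Set V}

def ancestors (E : V → V → Prop) (S : Set V) : Set V :=
  {v | ∃ t ∈ S, Relation.ReflTransGen E v t}

lemma subset_ancestors (S : Set V) : S ⊆ ancestors E S := fun v hv => ⟨v, hv, .refl⟩

lemma mem_ancestors_of_rel {S : Set V} {u v : V} (huv : E u v) (hv : v ∈ ancestors E S) :
    u ∈ ancestors E S :=
  let ⟨t, ht, hvt⟩ := hv
  ⟨t, ht, .head huv hvt⟩

def IsCollider (E : V → V → Prop) (a m b : V) : Prop := E a m ∧ E b m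

def ActiveAt (E : V → V → Prop) (Z : Set V) (a m b : V) : Prop :=
  (IsCollider E a m b → m ∈ ancestors E Z) ∧ (¬ IsCollider E a m b → m ∉ Z)

lemma activeAt_of_isCollider {a m b : V} (h : IsCollider E a m b) (hm : m ∈ ancestors E Z) :
    ActiveAt E Z a m b :=
  ⟨fun _ => hm, fun h' => absurd h h'⟩

lemma activeAt_of_not_isCollider {a m b : V} (h : ¬ IsCollider E a m b) (hm : m ∉ Z) :
    ActiveAt E Z a m b :=
  ⟨fun h' => absurd h' h, fun _ => hm⟩

lemma ActiveAt.symm {a m b : V} (h : ActiveAt E Z a m b) : ActiveAt E Z b m a := by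
  have hcol : IsCollider E b m a ↔ IsCollider E a m b := and_comm
  exact ⟨fun hc => h.1 (hcol.1 hc), fun hc => h.2 (mt hcol.2 hc)⟩

def IsActiveWalk (E : V → V → Prop) (Z : Set V) (w : List V) : Prop :=
  w.IsChain (AdjUndir E) ∧ ∀ a m b, [a, m, b] <:+: w → ActiveAt E Z a m b

lemma isActiveWalk_singleton (v : V) : IsActiveWalk E Z [v] :=
  ⟨.singleton v, fun _ _ _ h => absurd h.length_le (by simp)⟩

lemma isActiveWalk_cons_cons {a m : V} {l : List V} :
    IsActiveWalk E Z (a :: m :: l) ↔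
      AdjUndir E a m ∧ (∀ b ∈ l.head?, ActiveAt E Z a m b) ∧ IsActiveWalk E Z (m :: l) := by
  constructor
  · rintro ⟨hchain, htriple⟩
    refine ⟨(List.isChain_cons_cons.1 hchain).1, fun b hb => htriple a m b ?_,
      hchain.infix (List.suffix_cons _ _).isInfix,
      fun x y z h => htriple x y z (h.trans (List.suffix_cons _ _).isInfix)⟩
    obtain ⟨l', rfl⟩ : ∃ l', l = b :: l' := ⟨_, List.eq_cons_of_mem_head? hb⟩
    exact ⟨[], l', rfl⟩
  · rintro ⟨hadj, hhead, hchain, htriple⟩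
    refine ⟨List.isChain_cons_cons.2 ⟨hadj, hchain⟩, fun x y z h => ?_⟩
    rcases List.infix_cons_iff.1 h with h | h
    · obtain ⟨rfl, hyz⟩ := List.cons_prefix_cons.1 h
      obtain ⟨rfl, hz⟩ := List.cons_prefix_cons.1 hyz
      obtain ⟨l', rfl⟩ := hz
      exact hhead z rfl
    · exact htriple x y z h

lemma IsActiveWalk.infix {w w' : List V} (h : IsActiveWalk E Z w) (hw' : w' <:+: w) :
    IsActiveWalk E Z w' :=
  ⟨h.1.infix hw', fun a m b hi => h.2 a m b (hi.trans hw')⟩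

namespace IsActiveWalk

lemma reverse {w : List V} (h : IsActiveWalk E Z w) : IsActiveWalk E Z w.reverse := by
  refine ⟨List.isChain_reverse.2 (h.1.imp fun _ _ hab => hab.symm), fun a m b hi => ?_⟩
  exact (h.2 b m a (List.reverse_infix.1 (by simpa using hi))).symm

lemma append {l r : List V} {m : V} (hl : IsActiveWalk E Z (l ++ [m]))
    (hr : IsActiveWalk E Z (m :: r))
    (hm : ∀ a ∈ l.getLast?, ∀ b ∈ r.head?, ActiveAt E Z a m b) :
    IsActiveWalk E Z (l ++ m :: r) := by
  induction l with
  | nil => exact hr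
  | cons a l ih =>
    cases l with
    | nil => exact isActiveWalk_cons_cons.2 ⟨(isActiveWalk_cons_cons.1 hl).1, hm a rfl, hr⟩
    | cons a' l =>
      obtain ⟨hadj, hhead, htail⟩ := isActiveWalk_cons_cons.1 hl
      refine isActiveWalk_cons_cons.2 ⟨hadj, fun b hb => hhead b ?_, ih htail fun x hx => hm x ?_⟩
      · cases l <;> simpa using hb
      · simpa using hx

lemma not_blocked (hacyc : ∀ v, ¬ Relation.TransGen E v v) {w : List V}
    (h : IsActiveWalk E Z w) : ¬ Blocked E Z w := by
  rintro ⟨pre, post, a, m, b, rfl, hblock⟩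
  have hact := h.2 a m b ⟨pre, post, by simp⟩
  rcases hblock with ⟨hnc, hmZ⟩ | ⟨hcol, hdesc⟩
  · refine hact.2 (fun ⟨ham, hbm⟩ => ?_) hmZ
    rcases hnc with ⟨-, hmb⟩ | ⟨-, hma⟩ | ⟨hma, -⟩
    · exact hacyc m (.tail (.single hmb) hbm)
    · exact hacyc a (.tail (.single ham) hma)
    · exact hacyc a (.tail (.single ham) hma)
  · obtain ⟨d, hdZ, hmd⟩ := hact.1 hcol
    exact hdesc d hmd hdZ

/-- Leaving `c` along an out-edge, an active walk keeps moving downwards until it meets a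
collider, which is an ancestor of `Z`. -/
lemma transGen_or_mem_ancestors {c x y : V} {l : List V} (h : IsActiveWalk E Z (c :: x :: l))
    (hcx : E c x) (hy : (x :: l).getLast? = some y) :
    Relation.TransGen E c y ∨ c ∈ ancestors E Z := by
  induction l generalizing c x with
  | nil =>
    obtain rfl : x = y := by simpa using hy
    exact .inl (.single hcx)
  | cons x' l ih =>
    obtain ⟨-, hact, htail⟩ := isActiveWalk_cons_cons.1 h
    by_cases hx'x : E x' x
    · exact .inr (mem_ancestors_of_rel hcx ((hact x' rfl).1 ⟨hcx, hx'x⟩))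
    · have hxx' : E x x' := (isActiveWalk_cons_cons.1 htail).1.resolve_right hx'x
      rcases ih htail hxx' (by simpa using hy) with hxy | hx
      · exact .inl (.head hcx hxy)
      · exact .inr (mem_ancestors_of_rel hcx hx)

/-- If `c` becomes a collider, it already was one on entering the removed cycle, or the cycle
leaves `c` along an out-edge and so, by acyclicity, `c` is an ancestor of `Z`. -/
lemma shortcut (hacyc : ∀ v, ¬ Relation.TransGen E v v) {s t u : List V} {c : V}
    (h : IsActiveWalk E Z (s ++ c :: (t ++ c :: u))) : IsActiveWalk E Z (s ++ c :: u) := by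
  obtain ⟨t₀, t', rfl⟩ : ∃ t₀ t', t = t₀ :: t' := by
    refine List.exists_cons_of_ne_nil fun ht => ?_
    subst ht
    have hcc := isActiveWalk_cons_cons.1 (h.infix ⟨s, u, by simp⟩ : IsActiveWalk E Z [c, c])
    exact hcc.1.elim (fun h => hacyc c (.single h)) (fun h => hacyc c (.single h))
  have hloop : IsActiveWalk E Z (c :: t₀ :: (t' ++ [c])) := h.infix ⟨s, u, by simp⟩
  refine (h.infix ⟨[], t₀ :: t' ++ c :: u, by simp⟩).append
    (h.infix ⟨s ++ c :: t₀ :: t', [], by simp⟩) fun a ha b hb => ?_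
  have hout : ActiveAt E Z a c t₀ :=
    h.2 a c t₀ ⟨s.dropLast, t' ++ c :: u, by rw [← List.dropLast_append_getLast? a ha]; simp⟩
  have hin : ActiveAt E Z ((t₀ :: t').getLast (List.cons_ne_nil _ _)) c b := by
    obtain ⟨u', rfl⟩ : ∃ u', u = b :: u' := ⟨_, List.eq_cons_of_mem_head? hb⟩
    refine h.2 _ c b ⟨s ++ c :: (t₀ :: t').dropLast, u', ?_⟩
    conv_rhs => rw [← List.dropLast_append_getLast (List.cons_ne_nil t₀ t')]
    simp
  refine ⟨fun hcol => ?_, fun hnc => ?_⟩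
  · by_cases ht₀c : E t₀ c
    · exact hout.1 ⟨hcol.1, ht₀c⟩
    · have hct₀ : E c t₀ := (isActiveWalk_cons_cons.1 hloop).1.resolve_right ht₀c
      exact (hloop.transGen_or_mem_ancestors hct₀ (by simp [List.getLast?_cons])).resolve_left
        (hacyc c)
  · by_cases hac : E a c
    · exact hin.2 fun hcol => hnc ⟨hac, hcol.2⟩
    · exact hout.2 fun hcol => hac hcol.1

lemma exists_nodup (hacyc : ∀ v, ¬ Relation.TransGen E v v) {w : List V}
    (h : IsActiveWalk E Z w) :
    ∃ w', IsActiveWalk E Z w' ∧ w'.Nodup ∧ w'.head? = w.head? ∧ w'.getLast? = w.getLast? := by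
  induction hn : w.length using Nat.strong_induction_on generalizing w with
  | _ n ih =>
    by_cases hnd : w.Nodup
    · exact ⟨w, h, hnd, rfl, rfl⟩
    obtain ⟨c, s, t, u, rfl⟩ := List.exists_eq_append_cons_append_cons_of_not_nodup hnd
    obtain ⟨w', h', hnd', hhead, hlast⟩ :=
      ih _ (by simp [← hn]) (h.shortcut hacyc) rfl
    refine ⟨w', h', hnd', hhead.trans ?_, hlast.trans ?_⟩
    · cases s <;> simp
    · simp [List.getLast?_append, List.getLast?_cons]

end IsActiveWalk

end ActiveWalks

section Reach

variable {E : V → V → Prop} {Z : Set V}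

/-- Walks are listed from `v` back to `x`, so that extending them is `List.cons`. -/
def activeReach (E : V → V → Prop) (Z : Set V) (x : V) : Set V :=
  {v | ∃ l, IsActiveWalk E Z (v :: l) ∧ (v :: l).getLast? = some x}

lemma IsActiveWalk.cons_of_rel (hacyc : ∀ v, ¬ Relation.TransGen E v v) {v c : V} {l : List V}
    (h : IsActiveWalk E Z (v :: l)) (hv : v ∉ Z) (hvc : E v c) : IsActiveWalk E Z (c :: v :: l) :=
  isActiveWalk_cons_cons.2 ⟨.inr hvc, fun _ _ => activeAt_of_not_isCollider
    (fun hcol => hacyc v (.tail (.single hvc) hcol.1)) hv, h⟩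

lemma mem_activeReach_of_reflTransGen (hacyc : ∀ v, ¬ Relation.TransGen E v v) {x v t : V}
    (hv : v ∈ activeReach E Z x) (hZ : ∀ y, Relation.ReflTransGen E v y → y ∉ Z)
    (hvt : Relation.ReflTransGen E v t) : t ∈ activeReach E Z x := by
  induction hvt with
  | refl => exact hv
  | tail hvm hmt ih =>
    obtain ⟨l, hl, hlast⟩ := ih
    exact ⟨_ :: l, hl.cons_of_rel hacyc (hZ _ hvm) hmt, by simpa using hlast⟩

lemma exists_isActiveWalk_of_reflTransGen (hacyc : ∀ v, ¬ Relation.TransGen E v v) {v x : V}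
    (hvx : Relation.ReflTransGen E v x) (hZ : ∀ y, Relation.ReflTransGen E v y → y ∉ Z) :
    ∃ l, IsActiveWalk E Z (v :: l) ∧ (v :: l).getLast? = some x ∧ ∀ u ∈ l.head?, E v u := by
  induction hvx using Relation.ReflTransGen.head_induction_on with
  | refl => exact ⟨[], isActiveWalk_singleton x, rfl, by simp⟩
  | head hvv' _ ih =>
    obtain ⟨l, hl, hlast, hout⟩ := ih fun y hy => hZ y (.head hvv' hy)
    refine ⟨_ :: l, isActiveWalk_cons_cons.2 ⟨.inl hvv', fun u hu => ?_, hl⟩, by simpa using hlast,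
      by simp [hvv']⟩
    exact activeAt_of_not_isCollider (fun hcol => hacyc _ (.tail (.single (hout u hu)) hcol.2))
      (hZ _ (.single hvv'))

variable {v₁ v₂ : V}

/-- Directly when `v` is an ancestor of `Z`; otherwise `v` has a `Z`-free directed path to `v₁`
(one to `v₂` would make `v₂` reachable), and climbing it back from `v₁` enters `v` through an
out-edge. -/
lemma parent_mem_activeReach (hacyc : ∀ v, ¬ Relation.TransGen E v v)
    (hv₂ : v₂ ∉ activeReach E Z v₁) {v u w : V} {l : List V}
    (hvT : v ∈ ancestors E (insert v₁ (insert v₂ Z)))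
    (hwalk : IsActiveWalk E Z (v :: u :: l)) (hlast : (u :: l).getLast? = some v₁)
    (huv : E u v) (hwv : E w v) : w ∈ activeReach E Z v₁ := by
  by_cases hvZ : v ∈ ancestors E Z
  · refine ⟨v :: u :: l, isActiveWalk_cons_cons.2 ⟨.inl hwv, ?_, hwalk⟩, by simpa using hlast⟩
    rintro _ ⟨⟩
    exact activeAt_of_isCollider ⟨hwv, huv⟩ hvZ
  have hfree : ∀ y, Relation.ReflTransGen E v y → y ∉ Z := fun y hvy hyZ => hvZ ⟨y, hyZ, hvy⟩
  obtain ⟨t, ht, hvt⟩ := hvT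
  rcases ht with rfl | rfl | htZ
  · obtain ⟨l', hl', hlast', hout⟩ := exists_isActiveWalk_of_reflTransGen hacyc hvt hfree
    refine ⟨v :: l', isActiveWalk_cons_cons.2 ⟨.inl hwv, fun u' hu' => ?_, hl'⟩,
      by simpa using hlast'⟩
    exact activeAt_of_not_isCollider (fun hcol => hacyc v (.tail (.single (hout u' hu')) hcol.2))
      (hfree v .refl)
  · exact absurd (mem_activeReach_of_reflTransGen hacyc ⟨_, hwalk, by simpa using hlast⟩ hfree hvt)
      hv₂
  · exact absurd ⟨t, htZ, hvt⟩ hvZ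

lemma family_subset_activeReach (hacyc : ∀ v, ¬ Relation.TransGen E v v)
    (hv₂ : v₂ ∉ activeReach E Z v₁) {v w w' : V}
    (hvT : v ∈ ancestors E (insert v₁ (insert v₂ Z))) (hw : w = v ∨ E w v) (hwZ : w ∉ Z)
    (hwR : w ∈ activeReach E Z v₁) (hw' : w' = v ∨ E w' v) : w' ∈ activeReach E Z v₁ := by
  obtain ⟨l, hl, hlast⟩ := hwR
  rcases hw with rfl | hwv
  · rcases hw' with rfl | hw'w
    · exact ⟨l, hl, hlast⟩
    by_cases hdown : ∃ u ∈ l.head?, E u w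
    · obtain ⟨u, hu, huw⟩ := hdown
      obtain ⟨l', rfl⟩ : ∃ l', l = u :: l' := ⟨_, List.eq_cons_of_mem_head? hu⟩
      exact parent_mem_activeReach hacyc hv₂ hvT hl (by simpa using hlast) huw hw'w
    · refine ⟨w :: l, isActiveWalk_cons_cons.2 ⟨.inl hw'w, fun u hu => ?_, hl⟩,
        by simpa using hlast⟩
      exact activeAt_of_not_isCollider (fun hcol => hdown ⟨u, hu, hcol.2⟩) hwZ
  · have hv : IsActiveWalk E Z (v :: w :: l) := hl.cons_of_rel hacyc hwZ hwv
    rcases hw' with rfl | hw'v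
    · exact ⟨w :: l, hv, by simpa using hlast⟩
    · exact parent_mem_activeReach hacyc hv₂ hvT hv hlast hwv hw'v

lemma not_mem_activeReach_of_dSep (hacyc : ∀ v, ¬ Relation.TransGen E v v)
    (hsep : DSep E Z v₁ v₂) : v₂ ∉ activeReach E Z v₁ := by
  rintro ⟨l, hl, hlast⟩
  obtain ⟨w, hw, hnd, hhead, hwlast⟩ := hl.reverse.exists_nodup hacyc
  exact hw.not_blocked hacyc (hsep w hw.1 hnd (by rw [hhead, List.head?_reverse, hlast])
    (by rw [hwlast, List.getLast?_reverse]; rfl))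

def SeparatesFamilies (E : V → V → Prop) (Z T S : Set V) : Prop :=
  ∀ v ∈ T, (∀ w, (w = v ∨ E w v) → w ∈ S) ∨ ∀ w, (w = v ∨ E w v) → w ∈ S → w ∈ Z

lemma exists_separatesFamilies (hacyc : ∀ v, ¬ Relation.TransGen E v v) (hv₂Z : v₂ ∉ Z)
    (hsep : DSep E Z v₁ v₂) :
    ∃ S ⊆ ancestors E (insert v₁ (insert v₂ Z)), v₁ ∈ S ∧ v₂ ∉ S ∧ Z ⊆ S ∧
      SeparatesFamilies E Z (ancestors E (insert v₁ (insert v₂ Z))) S := by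
  set T := ancestors E (insert v₁ (insert v₂ Z))
  have hv₂ := not_mem_activeReach_of_dSep hacyc hsep
  refine ⟨{w | w ∈ T ∧ (w ∈ Z ∨ w ∈ activeReach E Z v₁)}, fun w hw => hw.1,
    ⟨subset_ancestors _ (by simp), .inr ⟨[], isActiveWalk_singleton v₁, rfl⟩⟩,
    fun h => h.2.elim hv₂Z hv₂, fun w hw => ⟨subset_ancestors _ (by simp [hw]), .inl hw⟩,
    fun v hvT => ?_⟩
  have hfamT : ∀ w, (w = v ∨ E w v) → w ∈ T := by
    rintro w (rfl | hwv)
    exacts [hvT, mem_ancestors_of_rel hwv hvT]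
  by_cases h : ∃ w, (w = v ∨ E w v) ∧ w ∉ Z ∧ w ∈ activeReach E Z v₁
  · obtain ⟨w, hw, hwZ, hwR⟩ := h
    exact .inl fun w' hw' =>
      ⟨hfamT w' hw', .inr (family_subset_activeReach hacyc hv₂ hvT hw hwZ hwR hw')⟩
  · refine .inr fun w hw hwS => hwS.2.elim id fun hwR => ?_
    by_contra hwZ
    exact h ⟨w, hw, hwZ, hwR⟩

end Reach

open Function

lemma exists_sink [Finite V] {E : V → V → Prop} (hacyc : ∀ v, ¬ Relation.TransGen E v v)
    {T : Finset V} (hT : T.Nonempty) : ∃ v ∈ T, ∀ w ∈ T, ¬ E v w := by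
  have : WellFounded (flip (Relation.TransGen E)) := by
    have : IsTrans V (flip (Relation.TransGen E)) := ⟨fun _ _ _ hab hbc => hbc.trans hab⟩
    have : Std.Irrefl (flip (Relation.TransGen E)) := ⟨hacyc⟩
    exact Finite.wellFounded_of_trans_of_irrefl _
  obtain ⟨v, hv, hmax⟩ := this.has_min T hT
  exact ⟨v, hv, fun w hw hvw => hmax w hw (.single hvw)⟩

lemma kernel_update_eq [DecidableEq V] {E : V → V → Prop} {f : V → (∀ v, Ω v) → ℝ}
    (hloc : ∀ v (x y : ∀ w, Ω w), x v = y v → (∀ w, E w v → x w = y w) → f v x = f v y)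
    {v w : V} (hvw : v ≠ w) (hE : ¬ E v w) (x : ∀ v, Ω v) (α : Ω v) :
    f w (update x v α) = f w x :=
  hloc w _ _ (update_of_ne hvw.symm _ _) fun u hu => update_of_ne (by rintro rfl; exact hE hu) _ _

open Classical in
noncomputable def ind (c : Prop) : ℝ := if c then 1 else 0

lemma ind_of_pos {c : Prop} (h : c) : ind c = 1 := if_pos h

lemma ind_of_neg {c : Prop} (h : ¬ c) : ind c = 0 := if_neg h

lemma ind_and (c d : Prop) : ind (c ∧ d) = ind c * ind d := by
  by_cases hc : c <;> by_cases hd : d <;> simp [ind, hc, hd]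

lemma sum_mul_ind_eq {α : Type*} [Fintype α] (c : α → ℝ) (a₀ : α) :
    ∑ a, c a * ind (a = a₀) = c a₀ := by
  rw [Finset.sum_eq_single a₀ (fun a _ ha => by rw [ind_of_neg ha, mul_zero]) (by simp),
    ind_of_pos rfl, mul_one]

lemma dependsOn_mem_setOf {v₁ v₂ : V} {Z T : Set V} (hT : insert v₁ (insert v₂ Z) ⊆ T)
    (α : Ω v₁ → Prop) (β : Ω v₂ → Prop) (z : ∀ v, Ω v) :
    DependsOn (· ∈ {x | α (x v₁) ∧ β (x v₂) ∧ ∀ w ∈ Z, x w = z w}) T := fun x y hxy => by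
  obtain ⟨h₁, h₂, hZ⟩ : x v₁ = y v₁ ∧ x v₂ = y v₂ ∧ ∀ w ∈ Z, x w = y w := by
    simpa only [Set.mem_insert_iff, forall_eq_or_imp] using fun w hw => hxy w (hT hw)
  simp +contextual [h₁, h₂, hZ]

section Sums

variable [Fintype V] [DecidableEq V] {E : V → V → Prop} {f : V → (∀ v, Ω v) → ℝ} {Z : Set V}

/-- `F` collects the kernels of the families of `T` inside `S`; the others only see `Sᶜ ∪ Z`. -/
lemma exists_dependsOn_factorization
    (hloc : ∀ v (x y : ∀ w, Ω w), x v = y v → (∀ w, E w v → x w = y w) → f v x = f v y)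
    (T : Finset V) {S : Set V} (hST : S ⊆ T) (hsep : SeparatesFamilies E Z T S)
    (z : ∀ v, Ω v) :
    ∃ F G : (∀ v, Ω v) → ℝ, DependsOn F S ∧ DependsOn G (Sᶜ ∪ Z) ∧
      ∀ x, (∏ v ∈ T, f v x) * ind (∀ v ∈ Tᶜ, x v = z v) = F x * G x := by
  classical
  let inS (v : V) : Prop := ∀ w, (w = v ∨ E w v) → w ∈ S
  refine ⟨fun x => ∏ v ∈ T.filter inS, f v x,
    fun x => (∏ v ∈ T.filter (¬ inS ·), f v x) * ind (∀ v ∈ Tᶜ, x v = z v), ?_, ?_, fun x => ?_⟩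
  · intro x y hxy
    refine Finset.prod_congr rfl fun v hv => ?_
    have hfam := (Finset.mem_filter.1 hv).2
    exact hloc v x y (hxy v (hfam v (.inl rfl))) fun w hw => hxy w (hfam w (.inr hw))
  · intro x y hxy
    have hprod : ∏ v ∈ T.filter (¬ inS ·), f v x = ∏ v ∈ T.filter (¬ inS ·), f v y := by
      refine Finset.prod_congr rfl fun v hv => ?_
      obtain ⟨hvT, hvS⟩ := Finset.mem_filter.1 hv
      have hfam : ∀ w, (w = v ∨ E w v) → x w = y w := fun w hw =>
        hxy w ((em (w ∈ S)).elim (fun hwS => .inr ((hsep v hvT).resolve_left hvS w hw hwS)) .inl)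
      exact hloc v x y (hfam v (.inl rfl)) fun w hw => hfam w (.inr hw)
    have hfix : (∀ v ∈ Tᶜ, x v = z v) ↔ ∀ v ∈ Tᶜ, y v = z v := forall₂_congr fun v hv => by
      rw [hxy v (.inl fun hvS => Finset.mem_compl.1 hv (hST hvS))]
    dsimp only
    rw [hprod, hfix]
  · rw [← mul_assoc, Finset.prod_filter_mul_prod_filter_not]

variable [∀ v, Fintype (Ω v)]

lemma pr_eq_sum_ind_mul (p : (∀ v, Ω v) → ℝ) (C : Set (∀ v, Ω v)) :
    pr p C = ∑ x, ind (x ∈ C) * p x :=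
  Finset.sum_congr rfl fun x _ => by
    by_cases hx : x ∈ C <;> simp [hx, ind_of_pos, ind_of_neg]

lemma sum_eq_sum_ind_mul_sum_update (F : (∀ v, Ω v) → ℝ) (v₀ : V) (c : Ω v₀) :
    ∑ x, F x = ∑ x, ind (x v₀ = c) * ∑ α, F (update x v₀ α) := by
  let e : (∀ v, Ω v) × Ω v₀ ≃ (∀ v, Ω v) × Ω v₀ :=
    { toFun := fun q => (update q.1 v₀ q.2, q.1 v₀)
      invFun := fun q => (update q.1 v₀ q.2, q.1 v₀)
      left_inv := fun q => by simp
      right_inv := fun q => by simp }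
  simp_rw [Finset.mul_sum, ← Fintype.sum_prod_type']
  rw [← e.sum_comp]
  simp only [e, Equiv.coe_fn_mk, update_self, update_idem, update_eq_self]
  rw [Fintype.sum_prod_type]
  simp_rw [mul_comm (ind _), sum_mul_ind_eq]

lemma sum_mul_kernel_eq {g k : (∀ v, Ω v) → ℝ} {v₀ : V}
    (hg : ∀ x α, g (update x v₀ α) = g x) (hk : ∀ x, ∑ α, k (update x v₀ α) = 1) (c : Ω v₀) :
    ∑ x, g x * k x = ∑ x, g x * ind (x v₀ = c) := by
  rw [sum_eq_sum_ind_mul_sum_update _ v₀ c]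
  refine Finset.sum_congr rfl fun x _ => ?_
  simp_rw [hg, ← Finset.mul_sum, hk, mul_one, mul_comm]

/-- Summing out the variables of `T`, sinks first, each kernel integrates to one. -/
lemma sum_mul_prod_kernel_eq (hacyc : ∀ v, ¬ Relation.TransGen E v v)
    (hloc : ∀ v (x y : ∀ w, Ω w), x v = y v → (∀ w, E w v → x w = y w) → f v x = f v y)
    (hker : ∀ v (x : ∀ w, Ω w), ∑ a : Ω v, f v (update x v a) = 1) (z : ∀ v, Ω v)
    (T : Finset V) {g : (∀ v, Ω v) → ℝ} (hg : ∀ x, ∀ v ∈ T, ∀ α, g (update x v α) = g x) :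
    ∑ x, g x * ∏ v ∈ T, f v x = ∑ x, g x * ind (∀ v ∈ T, x v = z v) := by
  induction T using Finset.strongInduction generalizing g with
  | H T ih =>
  rcases T.eq_empty_or_nonempty with rfl | hT
  · simp [ind_of_pos]
  obtain ⟨v₀, hv₀, hsink⟩ := exists_sink hacyc hT
  have hsplit : ∀ x : ∀ v, Ω v,
      (x v₀ = z v₀ ∧ ∀ v ∈ T.erase v₀, x v = z v) ↔ ∀ v ∈ T, x v = z v := fun x => by
    conv_rhs => rw [← Finset.insert_erase hv₀]
    rw [Finset.forall_mem_insert]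
  calc ∑ x, g x * ∏ v ∈ T, f v x
      = ∑ x, (g x * ∏ v ∈ T.erase v₀, f v x) * f v₀ x := by
        refine Finset.sum_congr rfl fun x _ => ?_
        rw [← Finset.mul_prod_erase T _ hv₀]
        ring
    _ = ∑ x, (g x * ∏ v ∈ T.erase v₀, f v x) * ind (x v₀ = z v₀) := by
        refine sum_mul_kernel_eq (fun x α => ?_) (hker v₀) (z v₀)
        rw [hg x v₀ hv₀]
        congr 1
        refine Finset.prod_congr rfl fun w hw => kernel_update_eq hloc ?_ ?_ x α
        · exact (Finset.ne_of_mem_erase hw).symm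
        · exact hsink w (Finset.mem_of_mem_erase hw)
    _ = ∑ x, (g x * ind (x v₀ = z v₀)) * ind (∀ v ∈ T.erase v₀, x v = z v) := by
        rw [Finset.sum_congr rfl fun x _ => mul_right_comm (g x) _ (ind (x v₀ = z v₀))]
        refine ih _ (Finset.erase_ssubset hv₀) fun x v hv α => ?_
        rw [hg x v (Finset.mem_of_mem_erase hv), update_of_ne (Finset.ne_of_mem_erase hv).symm]
    _ = ∑ x, g x * ind (∀ v ∈ T, x v = z v) := by
        simp_rw [mul_assoc, ← ind_and, hsplit]

lemma pr_eq_pr_prod_of_parents_mem (hacyc : ∀ v, ¬ Relation.TransGen E v v)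
    (hloc : ∀ v (x y : ∀ w, Ω w), x v = y v → (∀ w, E w v → x w = y w) → f v x = f v y)
    (hker : ∀ v (x : ∀ w, Ω w), ∑ a : Ω v, f v (update x v a) = 1)
    {p : (∀ v, Ω v) → ℝ} (hp : ∀ x, p x = ∏ v, f v x)
    (T : Finset V) (hT : ∀ v ∈ T, ∀ u, E u v → u ∈ T)
    {C : Set (∀ v, Ω v)} (hC : DependsOn (· ∈ C) (T : Set V)) (z : ∀ v, Ω v) :
    pr p C = pr (fun x => (∏ v ∈ T, f v x) * ind (∀ v ∈ Tᶜ, x v = z v)) C := by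
  simp_rw [pr_eq_sum_ind_mul, hp, ← Finset.prod_mul_prod_compl T, ← mul_assoc]
  refine sum_mul_prod_kernel_eq hacyc hloc hker z Tᶜ fun x v hv α => ?_
  have hvT : v ∉ T := Finset.mem_compl.1 hv
  congr 1
  · exact congrArg ind (hC fun w hw => update_of_ne (ne_of_mem_of_not_mem hw hvT) _ _)
  · exact Finset.prod_congr rfl fun w hw =>
    kernel_update_eq hloc (ne_of_mem_of_not_mem hw hvT).symm (fun h => hvT (hT w hw v h)) x α

lemma sum_mul_eq_mul_sum (S : Set V) {F G : (∀ v, Ω v) → ℝ} (hF : DependsOn F S)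
    (hG : DependsOn G Sᶜ) (x₀ : ∀ v, Ω v) :
    ∑ x, F x * G x =
      (∑ x, F x * ind (∀ v ∉ S, x v = x₀ v)) * ∑ x, G x * ind (∀ v ∈ S, x v = x₀ v) := by
  classical
  let e := (Equiv.piEquivPiSubtypeProd (· ∈ S) Ω).symm
  have hsum (H : (∀ v, Ω v) → ℝ) : ∑ x, H x = ∑ s, ∑ t, H (e (s, t)) := by
    rw [← Fintype.sum_prod_type', e.sum_comp]
  have hin (s t) (v : V) (hv : v ∈ S) : e (s, t) v = s ⟨v, hv⟩ := by
    simp [e, Equiv.piEquivPiSubtypeProd, hv]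
  have hout (s t) (v : V) (hv : v ∉ S) : e (s, t) v = t ⟨v, hv⟩ := by
    simp [e, Equiv.piEquivPiSubtypeProd, hv]
  let s₀ : ∀ v : {v // v ∈ S}, Ω v := fun v => x₀ v
  let t₀ : ∀ v : {v // v ∉ S}, Ω v := fun v => x₀ v
  have hF' (s t) : F (e (s, t)) = F (e (s, t₀)) :=
    hF fun v hv => by rw [hin _ _ v hv, hin _ _ v hv]
  have hG' (s t) : G (e (s, t)) = G (e (s₀, t)) :=
    hG fun v hv => by rw [hout _ _ v hv, hout _ _ v hv]
  have hindt (s t) : ind (∀ v ∉ S, e (s, t) v = x₀ v) = ind (t = t₀) := by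
    simp only [funext_iff, Subtype.forall, t₀]
    exact congrArg ind (propext (forall₂_congr fun v hv => by rw [hout _ _ v hv]))
  have hinds (s t) : ind (∀ v ∈ S, e (s, t) v = x₀ v) = ind (s = s₀) := by
    simp only [funext_iff, Subtype.forall, s₀]
    exact congrArg ind (propext (forall₂_congr fun v hv => by rw [hin _ _ v hv]))
  simp_rw [hsum, hindt, hinds, hF', hG', sum_mul_ind_eq, ← Finset.sum_mul_sum]
  rw [Finset.sum_comm (f := fun s t => G (e (s₀, t)) * ind (s = s₀))]
  simp_rw [sum_mul_ind_eq]

variable {v₁ v₂ : V}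

/-- Once the variables of `Z` are fixed, `G` only sees the coordinates outside `S`. -/
lemma exists_pr_eq_mul_of_dependsOn {S : Set V} (hZS : Z ⊆ S) (hv₁ : v₁ ∈ S) (hv₂ : v₂ ∉ S)
    {F G : (∀ v, Ω v) → ℝ} (hF : DependsOn F S) (hG : DependsOn G (Sᶜ ∪ Z)) (z : ∀ v, Ω v) :
    ∃ (φ : (Ω v₁ → Prop) → ℝ) (ψ : (Ω v₂ → Prop) → ℝ), ∀ α β,
      pr (fun x => F x * G x) {x | α (x v₁) ∧ β (x v₂) ∧ ∀ w ∈ Z, x w = z w} = φ α * ψ β := by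
  classical
  let fixZ (x : ∀ v, Ω v) : ∀ v, Ω v := Z.piecewise z x
  have hfixZ (x : ∀ v, Ω v) (hx : ∀ w ∈ Z, x w = z w) : fixZ x = x :=
    funext fun w => by by_cases hw : w ∈ Z <;> simp [fixZ, hw, hx]
  refine ⟨fun α => ∑ x, ind (α (x v₁) ∧ ∀ w ∈ Z, x w = z w) * F x * ind (∀ v ∉ S, x v = z v),
    fun β => ∑ x, ind (β (x v₂)) * G (fixZ x) * ind (∀ v ∈ S, x v = z v), fun α β => ?_⟩
  rw [pr_eq_sum_ind_mul, ← sum_mul_eq_mul_sum S _ _ z]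
  · refine Finset.sum_congr rfl fun x _ => ?_
    simp only [Set.mem_ofPred_eq, ind_and]
    by_cases hx : ∀ w ∈ Z, x w = z w
    · rw [hfixZ x hx]; ring
    · rw [ind_of_neg hx]; ring
  · intro x y hxy
    dsimp only
    rw [hF hxy, hxy v₁ hv₁, forall₂_congr fun w hw => by rw [hxy w (hZS hw)]]
  · intro x y hxy
    dsimp only
    rw [hxy v₂ hv₂, hG (x := fixZ x) (y := fixZ y) fun w hw => ?_]
    by_cases hwZ : w ∈ Z
    · simp [fixZ, hwZ]
    · simp [fixZ, hwZ, hxy w (hw.resolve_right hwZ)]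

lemma pr_mul_pr_eq_of_pr_eq_mul {μ : (∀ v, Ω v) → ℝ} {z : ∀ v, Ω v}
    {φ : (Ω v₁ → Prop) → ℝ} {ψ : (Ω v₂ → Prop) → ℝ}
    (h : ∀ α β, pr μ {x | α (x v₁) ∧ β (x v₂) ∧ ∀ w ∈ Z, x w = z w} = φ α * ψ β)
    (a : Ω v₁) (b : Ω v₂) :
    pr μ {x | x v₁ = a ∧ x v₂ = b ∧ ∀ w ∈ Z, x w = z w} * pr μ {x | ∀ w ∈ Z, x w = z w} =
      pr μ {x | x v₁ = a ∧ ∀ w ∈ Z, x w = z w} * pr μ {x | x v₂ = b ∧ ∀ w ∈ Z, x w = z w} := by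
  have hab := h (· = a) (· = b)
  have h₀ := h (fun _ => True) (fun _ => True)
  have ha := h (· = a) (fun _ => True)
  have hb := h (fun _ => True) (· = b)
  simp only [true_and] at hab h₀ ha hb
  rw [hab, h₀, ha, hb]
  ring

end Sums

theorem dsep_implies_condIndep_general [Fintype V] [DecidableEq V]
    (E : V → V → Prop) (hacyc : ∀ v, ¬ Relation.TransGen E v v)
    (Ω : V → Type*) [∀ v, Fintype (Ω v)]
    (p : (∀ v, Ω v) → ℝ)
    (hfact : Factorizes E p)
    (v1 v2 : V) (Z : Set V) (hZ2 : v2 ∉ Z)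
    (hsep : DSep E Z v1 v2) :
    ∀ (a : Ω v1) (b : Ω v2) (z : ∀ v, Ω v),
      pr p {x | x v1 = a ∧ x v2 = b ∧ ∀ w ∈ Z, x w = z w} *
        pr p {x | ∀ w ∈ Z, x w = z w} =
      pr p {x | x v1 = a ∧ ∀ w ∈ Z, x w = z w} *
        pr p {x | x v2 = b ∧ ∀ w ∈ Z, x w = z w} := by
  intro a b z
  classical
  obtain ⟨f, -, hloc, hker, hp⟩ := hfact
  obtain ⟨S, hST, hv1S, hv2S, hZS, hfam⟩ := exists_separatesFamilies hacyc hZ2 hsep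
  let T := (ancestors E (insert v1 (insert v2 Z))).toFinset
  have hT : ∀ v ∈ T, ∀ u, E u v → u ∈ T := by
    simpa [T] using fun v hv u huv => mem_ancestors_of_rel huv hv
  obtain ⟨F, G, hF, hG, hFG⟩ :=
    exists_dependsOn_factorization hloc T (by simpa [T] using hST) (by simpa [T] using hfam) z
  obtain ⟨φ, ψ, hφψ⟩ := exists_pr_eq_mul_of_dependsOn hZS hv1S hv2S hF hG z
  refine pr_mul_pr_eq_of_pr_eq_mul (φ := φ) (ψ := ψ) (fun α β => ?_) a b
  rw [pr_eq_pr_prod_of_parents_mem hacyc hloc hker hp T hT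
    (dependsOn_mem_setOf (by simpa [T] using subset_ancestors _) α β z) z]
  simp_rw [hFG]
  exact hφψ α β

/-- **d-separation implies conditional independence.**  If `v1` and `v2` are
d-separated by `Z ⊆ V \ {v1, v2}` in a DAG, then in any distribution that
factorizes according to the DAG, `X_{v1}` and `X_{v2}` are conditionally
independent given `X_Z`. -/
theorem dsep_implies_condIndep [Fintype V] [DecidableEq V]
    (E : V → V → Prop) (hacyc : ∀ v, ¬ Relation.TransGen E v v)
    (Ω : V → Type*) [∀ v, Fintype (Ω v)]
    (p : (∀ v, Ω v) → ℝ) (hp0 : ∀ x, 0 ≤ p x) (hp1 : ∑ x : ∀ v, Ω v, p x = 1)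
    (hfact : Factorizes E p)
    (v1 v2 : V) (Z : Set V) (hZ1 : v1 ∉ Z) (hZ2 : v2 ∉ Z)
    (hsep : DSep E Z v1 v2) :
    ∀ (a : Ω v1) (b : Ω v2) (z : ∀ v, Ω v),
      pr p {x | x v1 = a ∧ x v2 = b ∧ ∀ w ∈ Z, x w = z w} *
        pr p {x | ∀ w ∈ Z, x w = z w} =
      pr p {x | x v1 = a ∧ ∀ w ∈ Z, x w = z w} *
        pr p {x | x v2 = b ∧ ∀ w ∈ Z, x w = z w} :=
  dsep_implies_condIndep_general E hacyc Ω p hfact v1 v2 Z hZ2 hsep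

end Stmt2
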